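/- Under the parametrization b = -a - j + e₁t, d = -c - j + e₂t of the Wilson recurrence coefficient C_n(t) = n(n + c - a - j - 1 + e₁t)(n - N - a - c + (e₁+e₂)t)(n - j - 1 + e₂t) / ((2n - N - 1 + (e₁+e₂)t)(2n - N + (e₁+e₂)t)), where N = 2j+1, the following limits hold as t → 0 (along t ≠ 0): if n ∈ {0,…,N+1} with n ≠ j+1, then C_n(t) tends to n(n - j - 1 - a + c)(n - N - a - c)(n - j - 1)/((2n - 1 - N)(2n - N)); and C_{j+1}(t) tends to (e₂/(e₁+e₂))·(j+1)(j + a + c)(a - c). -/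
import Mathlib


open Filter Topology

noncomputable section

/-- The Wilson recurrence coefficient `Cₙ` under the parametrization
`b = -a - j + e₁ t`, `d = -c - j + e₂ t`, with `N = 2j+1`. -/
def wilsonC (j : ℕ) (a c e₁ e₂ : ℝ) (n : ℕ) (t : ℝ) : ℝ :=
  ((n : ℝ) * ((n : ℝ) + c - a - j - 1 + e₁ * t) *
      ((n : ℝ) - (2 * j + 1) - a - c + (e₁ + e₂) * t) * ((n : ℝ) - j - 1 + e₂ * t)) /
    ((2 * (n : ℝ) - (2 * j + 1) - 1 + (e₁ + e₂) * t) *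
      (2 * (n : ℝ) - (2 * j + 1) + (e₁ + e₂) * t))

theorem paraRacah_truncation_limit_C (j : ℕ) (a c e₁ e₂ : ℝ) (h : e₁ + e₂ ≠ 0) :
    (∀ n : ℕ, n ≤ 2 * j + 2 → n ≠ j + 1 →
      Tendsto (wilsonC j a c e₁ e₂ n) (𝓝[≠] (0 : ℝ))
        (𝓝 ((n : ℝ) * ((n : ℝ) - j - 1 - a + c) * ((n : ℝ) - (2 * j + 1) - a - c) *
            ((n : ℝ) - j - 1) /
          ((2 * (n : ℝ) - 1 - (2 * j + 1)) * (2 * (n : ℝ) - (2 * j + 1)))))) ∧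
    Tendsto (wilsonC j a c e₁ e₂ (j + 1)) (𝓝[≠] (0 : ℝ))
      (𝓝 (e₂ / (e₁ + e₂) * ((j : ℝ) + 1) * ((j : ℝ) + a + c) * (a - c))) := by
  constructor
  · intro n hn hne
    have hd1 : (2 * (n : ℝ) - (2 * (j : ℝ) + 1) - 1) ≠ 0 := by
      have h2 : (n : ℝ) ≠ (j : ℝ) + 1 := by
        intro hh
        exact hne (by exact_mod_cast hh)
      intro hh; apply h2; linarith
    have hd2 : (2 * (n : ℝ) - (2 * (j : ℝ) + 1)) ≠ 0 := by
      intro hh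
      have : (2 * n : ℤ) = 2 * j + 1 := by exact_mod_cast (by linarith : (2 * (n : ℝ)) = 2 * j + 1)
      omega
    have hcont : ContinuousAt (wilsonC j a c e₁ e₂ n) 0 := by
      unfold wilsonC
      apply ContinuousAt.div
      · fun_prop
      · fun_prop
      · simp only [mul_zero, add_zero]
        exact mul_ne_zero hd1 hd2
    have hT : Tendsto (wilsonC j a c e₁ e₂ n) (𝓝[≠] (0 : ℝ)) (𝓝 (wilsonC j a c e₁ e₂ n 0)) :=
      hcont.tendsto.mono_left nhdsWithin_le_nhds
    convert hT using 2
    unfold wilsonC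
    simp only [mul_zero, add_zero]
    rw [show (2 * (n : ℝ) - 1 - (2 * (j : ℝ) + 1)) = 2 * (n : ℝ) - (2 * (j : ℝ) + 1) - 1 by ring]
    congr 1
    ring
  · set g : ℝ → ℝ := fun t =>
      (((j : ℝ) + 1) * ((c - a) + e₁ * t) * (-(j : ℝ) - a - c + (e₁ + e₂) * t) * e₂) /
        ((e₁ + e₂) * (1 + (e₁ + e₂) * t)) with hg
    have key : ∀ t : ℝ, t ≠ 0 → wilsonC j a c e₁ e₂ (j + 1) t = g t := by
      intro t ht
      unfold wilsonC
      rw [hg]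
      push_cast
      rcases eq_or_ne (1 + (e₁ + e₂) * t) 0 with h1 | h1
      · rw [show (2 * ((j : ℝ) + 1) - (2 * (j : ℝ) + 1) + (e₁ + e₂) * t) = 0 by linarith,
          mul_zero, div_zero,
          show ((e₁ + e₂) * (1 + (e₁ + e₂) * t)) = 0 by rw [h1]; ring, div_zero]
      · have hA : 2 * ((j : ℝ) + 1) - (2 * (j : ℝ) + 1) - 1 + (e₁ + e₂) * t ≠ 0 := by
          have hm := mul_ne_zero h ht
          intro hh; apply hm; linarith
        have hB : 2 * ((j : ℝ) + 1) - (2 * (j : ℝ) + 1) + (e₁ + e₂) * t ≠ 0 := by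
          intro hh; apply h1; linarith
        rw [div_eq_div_iff (mul_ne_zero hA hB) (mul_ne_zero h h1)]
        ring
    have hgcont : ContinuousAt g 0 := by
      rw [hg]
      apply ContinuousAt.div
      · fun_prop
      · fun_prop
      · simp [h]
    have hT : Tendsto g (𝓝[≠] (0 : ℝ)) (𝓝 (g 0)) := hgcont.tendsto.mono_left nhdsWithin_le_nhds
    have heq : g 0 = e₂ / (e₁ + e₂) * ((j : ℝ) + 1) * ((j : ℝ) + a + c) * (a - c) := by
      rw [hg]
      simp only [mul_zero, add_zero]
      field_simp
      ring
    rw [heq] at hT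
    refine hT.congr' ?_
    filter_upwards [self_mem_nhdsWithin] with t ht
    exact (key t ht).symm
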